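/- For every positive integer k, the least ordinal β such that β → (top ω+1)^1_k holds is ω^k + 1. That is: for every coloring c : ω^k + 1 → k there exist i < k and a subset X ⊆ c⁻¹({i}) homeomorphic to ω + 1; and there is a coloring c : ω^k → k such that no color class contains a subspace homeomorphic to ω + 1. -/

import Mathlib

open Set Ordinal
open scoped Cardinal

noncomputable section

/-- Natural (Hessenberg) addition of ordinals, as `Ordinal.nadd` of the older Mathlib
(removed from Mathlib since). -/
def nadd.{u} (a b : Ordinal.{u}) : Ordinal.{u} :=
  max (blsub.{u, u} a fun a' _ => nadd a' b) (blsub.{u, u} b fun b' _ => nadd a b')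
termination_by (a, b)
decreasing_by
  all_goals first
    | exact Prod.Lex.left _ _ (by assumption)
    | exact Prod.Lex.right _ (by assumption)

infixl:65 " ♯ " => nadd

/-- Derived set (non-isolated points) of a set of ordinals, as a subspace. -/
def deriv' (s : Set Ordinal.{0}) : Set Ordinal.{0} := {x ∈ s | x ∈ closure (s \ {x})}

/-- Iterated Cantor–Bendixson derivative. -/
def iterDeriv (s : Set Ordinal.{0}) (o : Ordinal.{0}) : Set Ordinal.{0} :=
  Ordinal.limitRecOn o s (fun _ ih => deriv' ih) (fun o _ ih => ⋂ (p : Ordinal.{0}) (h : p < o), ih p h)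

/-- `s` contains a homeomorphic copy of the ordinal `α` (with its order topology). -/
def HomeoCopy (α : Ordinal.{0}) (s : Set Ordinal.{0}) : Prop :=
  ∃ t : Set Ordinal, t ⊆ s ∧ Nonempty ((Iio α : Set Ordinal.{0}) ≃ₜ t)

/-- Two ordinals are biembeddable: each is homeomorphic to a subspace of the other. -/
def Biembed (α β : Ordinal.{0}) : Prop := HomeoCopy α (Iio β) ∧ HomeoCopy β (Iio α)

/-- Two sets of ordinals are order-homeomorphic: there is an order-preserving homeomorphism. -/
def OrderHomeo (X Y : Set Ordinal.{0}) : Prop :=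
  ∃ e : X ≃ₜ Y, ∀ a b : X, a ≤ b ↔ e a ≤ e b

/-- An ordinal is order-reinforcing. -/
def OrderReinforcing (α : Ordinal.{0}) : Prop :=
  ∀ X : Set Ordinal, Nonempty ((Iio α : Set Ordinal.{0}) ≃ₜ X) → ∃ Y ⊆ X, OrderHomeo (Iio α) Y

/-- The Cantor–Bendixson rank of an ordinal: the least exponent in its Cantor normal form. -/
def CB (x : Ordinal.{0}) : Ordinal := if x = 0 then 0 else sSup {γ | (ω : Ordinal.{0}) ^ γ ∣ x}

/-- The natural (Hessenberg) sum of a finite family of ordinals. -/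
def natSumFam {k : ℕ} (α : Fin k → Ordinal.{0}) : Ordinal := (List.ofFn α).foldr (· ♯ ·) 0

/-- The Milner–Rado sum of a finite family of ordinals. -/
def mrSumFam {k : ℕ} (α : Fin k → Ordinal.{0}) : Ordinal :=
  sInf {δ | ∀ β : Fin k → Ordinal, (∀ i, β i < α i) → δ ≠ natSumFam β}

/-- The topological pigeonhole relation `β → (top α i)¹` for finitely many colours. -/
def TopPH {k : ℕ} (β : Ordinal.{0}) (α : Fin k → Ordinal.{0}) : Prop :=
  ∀ c : Ordinal → Fin k, ∃ i, HomeoCopy (α i) (Iio β ∩ c ⁻¹' {i})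

/-- The topological pigeonhole relation with an arbitrary index type of colours. -/
def TopPHFam {ι : Type*} (β : Ordinal.{0}) (α : ι → Ordinal.{0}) : Prop :=
  ∀ c : Ordinal → ι, ∃ i, HomeoCopy (α i) (Iio β ∩ c ⁻¹' {i})

/-- `ω̄[γ, m]`: `ω ^ γ * m + 1` if `γ > 0`, and `m` if `γ = 0`. -/
def obar (γ : Ordinal.{0}) (m : ℕ) : Ordinal := if γ = 0 then (m : Ordinal.{0}) else ω ^ γ * m + 1

/-- `C` is closed and unbounded in `o`. -/
def IsClubIn (C : Set Ordinal.{0}) (o : Ordinal.{0}) : Prop :=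
  C ⊆ Iio o ∧ (∀ x < o, ∃ y ∈ C, x ≤ y) ∧
    ∀ x < o, x ≠ 0 → (∀ y < x, ∃ z ∈ C, y < z ∧ z < x) → x ∈ C

/-- `S` is stationary in `o`: it meets every club subset of `o`. -/
def StationaryIn (S : Set Ordinal.{0}) (o : Ordinal.{0}) : Prop :=
  ∀ C, IsClubIn C o → (S ∩ C).Nonempty

/-!
Upper bound: below a countable ordinal, a point of `s` that is an accumulation point of `s` is
the limit of a strictly increasing sequence in `s`, and the sequence together with its limit is a
copy of `ω + 1`. So if no colour class contains a copy, every class is isolated from the left at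
each of its points. Then, by induction on `n`, a union of `n` such classes misses a point of every
interval `(a, x]` with `ω ^ n ∣ x`: if `x` itself is coloured by class `j`, pass to a smaller
multiple of `ω ^ (n - 1)` inside the gap of class `j` below `x`. For `n = k`, `x = ω ^ k` this
leaves a point of `ω ^ k + 1` without a colour.

Lower bound: colour `x < ω ^ k` by the largest `j < k` with `ω ^ j ∣ x`. Points of class `j` are
multiples of `ω ^ j` but not of `ω ^ (j + 1)`, hence isolated among the multiples of `ω ^ j`, so
each class is discrete, whereas `ω + 1` is compact and infinite.
-/

open Filter Topology

namespace Ordinal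

theorem isCountablyGenerated_nhds {x : Ordinal.{u}} (hx : x.card ≤ ℵ₀) :
    (𝓝 x).IsCountablyGenerated := by
  rcases eq_or_ne x 0 with rfl | hx0
  · rw [SuccOrder.nhds_of_isMin fun _ _ => zero_le]
    infer_instance
  · refine HasCountableBasis.isCountablyGenerated
      ⟨SuccOrder.hasBasis_nhds_Ioc_of_exists_lt ⟨0, pos_iff_ne_zero.2 hx0⟩, ?_⟩
    change (Iio x).Countable
    rw [← Set.countable_coe_iff, ← Cardinal.mk_le_aleph0_iff, Cardinal.mk_Iio_ordinal]
    exact Cardinal.lift_le_aleph0.2 hx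

theorem exists_strictMono_tendsto_of_accPt {s : Set Ordinal.{u}} {x : Ordinal.{u}}
    (hx : x.card ≤ ℵ₀) (h : AccPt x (𝓟 s)) :
    ∃ u : ℕ → Ordinal, StrictMono u ∧ (∀ n, u n < x) ∧ Tendsto u atTop (𝓝 x) ∧ ∀ n, u n ∈ s := by
  have := isCountablyGenerated_nhds hx
  obtain ⟨hmin, hs⟩ := SuccOrder.accPt_principal.1 h
  have hlub : IsLUB (s ∩ Iio x) x := by
    refine ⟨fun _ hy => hy.2.le, fun b hb => not_lt.1 fun hbx => ?_⟩
    obtain ⟨y, hys, hby, hyx⟩ := hs b hbx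
    exact (hb ⟨hys, hyx⟩).not_gt hby
  obtain ⟨b, hbx⟩ := not_isMin_iff.1 hmin
  obtain ⟨u, hu, hux, hlim, hus⟩ := hlub.exists_seq_strictMono_tendsto_of_notMem
    (fun hx => lt_irrefl x hx.2) ((hs b hbx).mono fun _ hy => ⟨hy.1, hy.2.2⟩)
  exact ⟨u, hu, hux, hlim, fun n => (hus n).1⟩

instance : CompactSpace (Iio (ω + 1) : Set Ordinal.{u}) := by
  rw [← isCompact_iff_compactSpace, ← Order.succ_eq_add_one, Order.Iio_succ, ← Set.Icc_bot]
  exact isCompact_Icc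

theorem exists_dvd_mem_Ioo {p x b : Ordinal.{u}} (hx : p * ω ∣ x) (hb : b < x) :
    ∃ y, p ∣ y ∧ y ∈ Ioo b x := by
  obtain ⟨r, rfl⟩ := hx
  have hp : p ≠ 0 := by rintro rfl; simp at hb
  have hr : r ≠ 0 := by rintro rfl; simp at hb
  refine ⟨p * Order.succ (b / p), dvd_mul_right _ _, lt_mul_succ_div b hp, ?_⟩
  rw [mul_assoc, mul_lt_mul_iff_right₀ (pos_iff_ne_zero.2 hp)]
  rw [mul_assoc, lt_mul_iff_div_lt hp] at hb
  exact (isSuccLimit_mul_left isSuccLimit_omega0 (pos_iff_ne_zero.2 hr)).succ_lt hb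

theorem not_accPt_setOf_dvd {p x : Ordinal.{u}} (hpx : p ∣ x) (hx : ¬p * ω ∣ x) :
    ¬AccPt x (𝓟 {z | p ∣ z}) := by
  obtain ⟨q, rfl⟩ := hpx
  have hp : 0 < p := pos_iff_ne_zero.2 fun hp => hx (by simp [hp])
  obtain ⟨q₀, hq₀⟩ := Order.not_isSuccPrelimit_iff.1
    fun h => hx (mul_dvd_mul_left p (isSuccPrelimit_iff_omega0_dvd.1 h))
  rw [SuccOrder.accPt_principal]
  rintro ⟨-, h⟩
  obtain ⟨_, ⟨r, rfl⟩, hlo, hhi⟩ := h (p * q₀) ((mul_lt_mul_iff_right₀ hp).2 hq₀.lt)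
  rw [mul_lt_mul_iff_right₀ hp] at hlo hhi
  exact hq₀.2 hlo hhi

theorem exists_mem_Ioc_forall_notMem {ι : Type*} {s : ι → Set Ordinal.{u}}
    (hs : ∀ i, ∀ x ∈ s i, ¬AccPt x (𝓟 (s i))) (F : Finset ι) {a x : Ordinal.{u}}
    (hx : ω ^ (F.card : Ordinal) ∣ x) (ha : a < x) : ∃ y ∈ Ioc a x, ∀ i ∈ F, y ∉ s i := by
  classical
  induction hF : F.card generalizing F a x with
  | zero => exact ⟨x, ⟨ha, le_rfl⟩, by simp [Finset.card_eq_zero.1 hF]⟩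
  | succ n ih =>
    by_cases hxF : ∃ j ∈ F, x ∈ s j
    · obtain ⟨j, hjF, hxj⟩ := hxF
      obtain ⟨b, hbx, hb⟩ : ∃ b < x, ¬(s j ∩ Ioo b x).Nonempty := by
        by_contra! h
        exact hs j x hxj (SuccOrder.accPt_principal.2 ⟨not_isMin_of_lt ha, h⟩)
      rw [hF, Nat.cast_add_one, opow_add_one] at hx
      obtain ⟨x', hx', hx'lo, hx'x⟩ := exists_dvd_mem_Ioo hx (max_lt ha hbx)
      have hcard : (F.erase j).card = n := by rw [Finset.card_erase_of_mem hjF, hF]; rfl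
      obtain ⟨y, ⟨hy_lo, hy_hi⟩, hy⟩ := ih (F.erase j) (by rwa [hcard]) hx'lo hcard
      refine ⟨y, ⟨(le_max_left a b).trans_lt hy_lo, hy_hi.trans hx'x.le⟩, fun i hi hyi => ?_⟩
      rcases eq_or_ne i j with rfl | hij
      · exact hb ⟨y, hyi, (le_max_right a b).trans_lt hy_lo, hy_hi.trans_lt hx'x⟩
      · exact hy i (Finset.mem_erase.2 ⟨hij, hi⟩) hyi
    · exact ⟨x, ⟨ha, le_rfl⟩, fun i hi hxi => hxF ⟨i, hi, hxi⟩⟩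

end Ordinal

theorem HomeoCopy.mono {α : Ordinal.{0}} {s t : Set Ordinal.{0}} (h : HomeoCopy α s) (hst : s ⊆ t) :
    HomeoCopy α t :=
  let ⟨u, hus, he⟩ := h
  ⟨u, hus.trans hst, he⟩

theorem homeoCopy_omega0_add_one_of_tendsto {u : ℕ → Ordinal.{0}} {x : Ordinal.{0}}
    (hu : StrictMono u) (hux : ∀ n, u n < x) (hlim : Tendsto u atTop (𝓝 x)) :
    HomeoCopy (ω + 1) (insert x (range u)) := by
  set g : Ordinal.{0} → Ordinal.{0} := fun o => if o < ω then u o.card.toNat else x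
  have g_nat (n : ℕ) : g n = u n := by simp [g, natCast_lt_omega0]
  have g_of_le {o : Ordinal} (ho : ω ≤ o) : g o = x := if_neg ho.not_gt
  have hmono : StrictMonoOn g (Iio (ω + 1)) := by
    intro a _ b hb hab
    have hb : b ≤ ω := Order.lt_add_one_iff.1 hb
    obtain ⟨m, rfl⟩ := lt_omega0.1 (hab.trans_le hb)
    rcases hb.lt_or_eq with hbω | rfl
    · obtain ⟨n, rfl⟩ := lt_omega0.1 hbω
      rw [g_nat, g_nat]
      exact hu (by exact_mod_cast hab)
    · rw [g_nat, g_of_le le_rfl]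
      exact hux m
  have hcont : Continuous g := continuous_iff_continuousAt.2 fun o => by
    rcases lt_trichotomy o ω with ho | rfl | ho
    · obtain ⟨n, rfl⟩ := lt_omega0.1 ho
      rw [ContinuousAt, SuccOrder.nhds_eq_pure.2 (Order.not_isSuccLimit_natCast n)]
      exact tendsto_pure_nhds g _
    · rw [ContinuousAt, ← nhdsLT_sup_nhdsGE, tendsto_sup, g_of_le le_rfl]
      refine ⟨fun V hV => mem_map.2 ?_, tendsto_const_nhds.congr' ?_⟩
      · obtain ⟨N, hN⟩ := eventually_atTop.1 (hlim hV)
        filter_upwards [Ioo_mem_nhdsLT (natCast_lt_omega0 N)] with o ⟨hNo, hoω⟩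
        obtain ⟨m, rfl⟩ := lt_omega0.1 hoω
        rw [mem_preimage, g_nat]
        exact hN m (by exact_mod_cast hNo.le)
      · filter_upwards [self_mem_nhdsWithin] with o ho
        exact (g_of_le ho).symm
    · refine tendsto_const_nhds.congr' ?_
      filter_upwards [Ioi_mem_nhds ho] with o' ho'
      rw [g_of_le ho.le, g_of_le (le_of_lt ho')]
  have hemb := (hcont.comp continuous_subtype_val).isClosedEmbedding hmono.injOn.injective
  refine ⟨_, ?_, ⟨hemb.isEmbedding.toHomeomorph⟩⟩
  rintro _ ⟨o, rfl⟩
  by_cases ho : o.1 < ω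
  · exact Or.inr ⟨_, (if_pos ho).symm⟩
  · exact Or.inl (if_neg ho)

theorem homeoCopy_omega0_add_one_of_accPt {s : Set Ordinal.{0}} {x : Ordinal.{0}} (hxs : x ∈ s)
    (hx : x.card ≤ ℵ₀) (h : AccPt x (𝓟 s)) : HomeoCopy (ω + 1) s := by
  obtain ⟨u, hu, hux, hlim, hus⟩ := Ordinal.exists_strictMono_tendsto_of_accPt hx h
  exact (homeoCopy_omega0_add_one_of_tendsto hu hux hlim).mono
    (insert_subset hxs (range_subset_iff.2 hus))

theorem not_homeoCopy_omega0_add_one {s : Set Ordinal.{0}} (hs : ∀ x ∈ s, ¬AccPt x (𝓟 s)) :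
    ¬HomeoCopy (ω + 1) s := by
  rintro ⟨t, hts, ⟨e⟩⟩
  have : DiscreteTopology t := (discreteTopology_of_noAccPts hs).of_subset hts
  have : DiscreteTopology (Iio (ω + 1) : Set Ordinal.{0}) := e.isEmbedding.discreteTopology
  have : Finite (Iio (ω + 1) : Set Ordinal.{0}) := finite_of_compact_of_discrete
  refine Set.infinite_of_injective_forall_mem (s := Iio (ω + 1)) Nat.cast_injective (fun n => ?_)
    (Set.toFinite _)
  exact (natCast_lt_omega0 n).trans (Order.lt_add_one_iff.2 le_rfl)

theorem TopPH.mono {k : ℕ} {β β' : Ordinal.{0}} {α : Fin k → Ordinal.{0}} (h : TopPH β α)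
    (hβ : β ≤ β') : TopPH β' α :=
  fun c => (h c).imp fun _ hi => hi.mono (inter_subset_inter_left _ (Iio_subset_Iio hβ))

theorem topPH_omega0_opow_add_one (k : ℕ) :
    TopPH (ω ^ (k : Ordinal.{0}) + 1) (fun _ : Fin k => ω + 1) := by
  intro c
  by_contra! hc
  set S : Fin k → Set Ordinal.{0} := fun i => Iio (ω ^ (k : Ordinal.{0}) + 1) ∩ c ⁻¹' {i}
  have hcard : (ω ^ (k : Ordinal.{0})).card ≤ ℵ₀ := by simpa using card_opow_le ω k
  have hS : ∀ i, ∀ x ∈ S i, ¬AccPt x (𝓟 (S i)) := fun i x hx hacc =>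
    hc i (homeoCopy_omega0_add_one_of_accPt hx
      ((card_le_card (Order.lt_add_one_iff.1 hx.1)).trans hcard) hacc)
  obtain ⟨y, ⟨-, hy⟩, hyS⟩ := Ordinal.exists_mem_Ioc_forall_notMem hS Finset.univ (by simp)
    (opow_pos (k : Ordinal.{0}) omega0_pos)
  exact hyS (c y) (Finset.mem_univ _) ⟨Order.lt_add_one_iff.2 hy, rfl⟩

open Classical in
/-- For `0 < x < ω ^ (n + 1)` this is the Cantor–Bendixson rank `CB x`. -/
def dvdRank (n : ℕ) (x : Ordinal.{0}) : Fin (n + 1) :=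
  ⟨Nat.findGreatest (fun j => ω ^ (j : Ordinal.{0}) ∣ x) n,
    Nat.lt_succ_of_le (Nat.findGreatest_le n)⟩

theorem opow_dvdRank_dvd (n : ℕ) (x : Ordinal.{0}) : ω ^ ((dvdRank n x : ℕ) : Ordinal.{0}) ∣ x := by
  classical
  exact Nat.findGreatest_spec (P := fun j => ω ^ (j : Ordinal.{0}) ∣ x) (Nat.zero_le n) (by simp)

theorem not_opow_dvdRank_mul_omega0_dvd {n : ℕ} {x : Ordinal.{0}} (hx0 : x ≠ 0)
    (hx : x < ω ^ ((n + 1 : ℕ) : Ordinal.{0})) :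
    ¬ω ^ ((dvdRank n x : ℕ) : Ordinal.{0}) * ω ∣ x := by
  classical
  rw [← opow_add_one, ← Nat.cast_add_one]
  intro h
  rcases (Nat.lt_succ_iff.1 (dvdRank n x).is_lt).lt_or_eq with hlt | heq
  · exact Nat.findGreatest_is_greatest (P := fun j => ω ^ (j : Ordinal.{0}) ∣ x)
      (Nat.lt_succ_self _) hlt h
  · rw [heq] at h
    exact hx.not_ge (le_of_dvd hx0 h)

theorem not_topPH_omega0_opow (n : ℕ) :
    ¬TopPH (ω ^ ((n + 1 : ℕ) : Ordinal.{0})) (fun _ : Fin (n + 1) => ω + 1) := by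
  intro h
  obtain ⟨i, hi⟩ := h (dvdRank n)
  refine not_homeoCopy_omega0_add_one (fun x hx hacc => ?_) hi
  obtain ⟨hxlt, hxi⟩ := hx
  rcases eq_or_ne x 0 with rfl | hx0
  · exact hacc.not_isMin fun _ _ => zero_le
  refine Ordinal.not_accPt_setOf_dvd (opow_dvdRank_dvd n x)
    (not_opow_dvdRank_mul_omega0_dvd hx0 hxlt) (hacc.mono (principal_mono.2 ?_))
  rintro z ⟨-, hzi⟩
  exact (show dvdRank n z = dvdRank n x from hzi.trans hxi.symm) ▸ opow_dvdRank_dvd n z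

/-- `P^top(ω+1)_k = ω^k + 1`. -/
theorem topPH_omega_succ (k : ℕ) (hk : 0 < k) :
    IsLeast {β : Ordinal.{0} | TopPH β (fun _ : Fin k => ω + 1)} (ω ^ (k : Ordinal.{0}) + 1) := by
  refine ⟨topPH_omega0_opow_add_one k, fun β hβ => ?_⟩
  obtain ⟨n, rfl⟩ : ∃ n, k = n + 1 := ⟨k - 1, by omega⟩
  by_contra! hlt
  exact not_topPH_omega0_opow n (hβ.mono (Order.lt_add_one_iff.1 hlt))

end
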